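/- Chain identity for L-conditional entropy along a time series: H_L(Y₀ | X₋δ) = H_L(Y₀ | X₀) + Σ_{k=0}^{δ−1} I_L(Y₀; X₋k | X₋k₋1) − Σ_{k=0}^{δ−1} I_L(Y₀; X₋k₋1 | X₋k), where both summations are nondecreasing in δ. -/

import Mathlib

open Finset

/-! Each term of `condH` is the Bayes risk of the unnormalised weights `P ω · 1[Z ω = z]`.
The risk of a fixed action is linear in the weights, so the Bayes risk, a minimum of linear
functions, is superadditive; splitting the weights along a finer variable can therefore only
lower the total risk. The chain identity itself is a telescoping sum, and the two sums are
monotone because each of their terms is such a difference of risks. -/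

/-- The L-conditional entropy (conditional Bayes risk). -/
noncomputable def condH {Ω ZT 𝒴 A : Type*} [Fintype Ω] [Fintype ZT] [DecidableEq ZT]
    (P : Ω → ℝ) (L : 𝒴 → A → ℝ) (Yv : Ω → 𝒴) (Zv : Ω → ZT) : ℝ :=
  ∑ z : ZT, sInf {r : ℝ | ∃ a : A,
    r = ∑ ω : Ω, (if Zv ω = z then P ω else 0) * L (Yv ω) a}

section BayesRisk

variable {Ω 𝒴 A : Type*} [Fintype Ω] (L : 𝒴 → A → ℝ) (Yv : Ω → 𝒴)

noncomputable def bayesRisk (w : Ω → ℝ) : ℝ :=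
  sInf {r : ℝ | ∃ a : A, r = ∑ ω, w ω * L (Yv ω) a}

variable {L Yv}

lemma bayesRisk_eq_of_forall_le {w : Ω → ℝ} {a : A}
    (ha : ∀ a' : A, ∑ ω, w ω * L (Yv ω) a ≤ ∑ ω, w ω * L (Yv ω) a') :
    bayesRisk L Yv w = ∑ ω, w ω * L (Yv ω) a :=
  IsLeast.csInf_eq ⟨⟨a, rfl⟩, by rintro r ⟨a', rfl⟩; exact ha a'⟩

lemma sum_bayesRisk_le_bayesRisk_sum
    (hattain : ∀ w : Ω → ℝ, (∀ ω, 0 ≤ w ω) →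
      ∃ a : A, ∀ a' : A, ∑ ω, w ω * L (Yv ω) a ≤ ∑ ω, w ω * L (Yv ω) a')
    {ι : Type*} (s : Finset ι) (w : ι → Ω → ℝ) (hw : ∀ i ω, 0 ≤ w i ω) :
    ∑ i ∈ s, bayesRisk L Yv (w i) ≤ bayesRisk L Yv (fun ω => ∑ i ∈ s, w i ω) := by
  obtain ⟨a, ha⟩ := hattain _ fun ω => sum_nonneg fun i _ => hw i ω
  rw [bayesRisk_eq_of_forall_le ha]
  simp_rw [sum_mul]
  rw [sum_comm]
  refine sum_le_sum fun i _ => ?_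
  obtain ⟨ai, hai⟩ := hattain (w i) (hw i)
  rw [bayesRisk_eq_of_forall_le hai]
  exact hai a

end BayesRisk

lemma ite_comp_eq_sum_filter_ite {Ω W Z : Type*} [Fintype W] [DecidableEq W] [DecidableEq Z]
    (P : Ω → ℝ) (Wv : Ω → W) (f : W → Z) (z : Z) (ω : Ω) :
    (if f (Wv ω) = z then P ω else 0) = ∑ w ∈ univ with f w = z, if Wv ω = w then P ω else 0 := by
  rw [sum_ite_eq]
  simp

lemma condH_le_condH_comp {Ω 𝒴 A W Z : Type*} [Fintype Ω] [Fintype W] [DecidableEq W]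
    [Fintype Z] [DecidableEq Z] {P : Ω → ℝ} {L : 𝒴 → A → ℝ} {Yv : Ω → 𝒴} (hnn : ∀ ω, 0 ≤ P ω)
    (hattain : ∀ w : Ω → ℝ, (∀ ω, 0 ≤ w ω) →
      ∃ a : A, ∀ a' : A, ∑ ω, w ω * L (Yv ω) a ≤ ∑ ω, w ω * L (Yv ω) a')
    (Wv : Ω → W) (f : W → Z) :
    condH P L Yv Wv ≤ condH P L Yv (f ∘ Wv) := by
  change ∑ w, bayesRisk L Yv _ ≤ ∑ z, bayesRisk L Yv _
  rw [← sum_fiberwise univ f]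
  refine sum_le_sum fun z _ => ?_
  simp_rw [Function.comp_apply, ite_comp_eq_sum_filter_ite P Wv f z]
  exact sum_bayesRisk_le_bayesRisk_sum hattain _ _ fun w ω => by
    split_ifs
    exacts [hnn ω, le_rfl]

lemma sum_range_sub_sub_sum_range_sub (a c : ℕ → ℝ) (n : ℕ) :
    ∑ k ∈ range n, (a (k + 1) - c k) - ∑ k ∈ range n, (a k - c k) = a n - a 0 := by
  rw [← sum_sub_distrib, ← sum_range_sub a]
  exact sum_congr rfl fun k _ => by ring

lemma monotone_sum_range_of_nonneg {f : ℕ → ℝ} (hf : ∀ k, 0 ≤ f k) :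
    Monotone fun n => ∑ k ∈ range n, f k :=
  fun _ _ hmn => sum_le_sum_of_subset_of_nonneg (range_mono hmn) fun k _ _ => hf k

theorem stmt6_general {Ω 𝒴 𝒳 A : Type*} [Fintype Ω] [Fintype 𝒳] [DecidableEq 𝒳]
    (P : Ω → ℝ) (L : 𝒴 → A → ℝ) (Yv : Ω → 𝒴) (Xv : ℕ → Ω → 𝒳)
    (hnn : ∀ ω, 0 ≤ P ω)
    (hattain : ∀ w : Ω → ℝ, (∀ ω, 0 ≤ w ω) →
      ∃ a : A, ∀ a' : A, ∑ ω, w ω * L (Yv ω) a ≤ ∑ ω, w ω * L (Yv ω) a')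
    (δ : ℕ) :
    (condH P L Yv (Xv δ)
      = condH P L Yv (Xv 0)
        + (∑ k ∈ Finset.range δ,
            (condH P L Yv (Xv (k + 1)) - condH P L Yv (fun ω => (Xv k ω, Xv (k + 1) ω))))
        - ∑ k ∈ Finset.range δ,
            (condH P L Yv (Xv k) - condH P L Yv (fun ω => (Xv k ω, Xv (k + 1) ω))))
    ∧ Monotone (fun d : ℕ => ∑ k ∈ Finset.range d,
        (condH P L Yv (Xv (k + 1)) - condH P L Yv (fun ω => (Xv k ω, Xv (k + 1) ω))))
    ∧ Monotone (fun d : ℕ => ∑ k ∈ Finset.range d,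
        (condH P L Yv (Xv k) - condH P L Yv (fun ω => (Xv k ω, Xv (k + 1) ω)))) := by
  set H : ℕ → ℝ := fun k => condH P L Yv (Xv k)
  set Hpair : ℕ → ℝ := fun k => condH P L Yv (fun ω => (Xv k ω, Xv (k + 1) ω))
  have pair_le_fst (k : ℕ) : Hpair k ≤ H k :=
    condH_le_condH_comp hnn hattain (fun ω => (Xv k ω, Xv (k + 1) ω)) Prod.fst
  have pair_le_snd (k : ℕ) : Hpair k ≤ H (k + 1) :=
    condH_le_condH_comp hnn hattain (fun ω => (Xv k ω, Xv (k + 1) ω)) Prod.snd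
  refine ⟨?_, monotone_sum_range_of_nonneg fun k => sub_nonneg.2 (pair_le_snd k),
    monotone_sum_range_of_nonneg fun k => sub_nonneg.2 (pair_le_fst k)⟩
  linarith [sum_range_sub_sub_sum_range_sub H Hpair δ]

/-- chain identity along a time series (`Xv k` models `X₋k`):
`H_L(Y₀|X₋δ) = H_L(Y₀|X₀) + Σ_{k<δ} I_L(Y₀;X₋k|X₋k₋1) − Σ_{k<δ} I_L(Y₀;X₋k₋1|X₋k)`,
where `I_L(Y;X|Z) = H_L(Y|Z) − H_L(Y|X,Z)`, and both summations are
nondecreasing in `δ`. -/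
theorem stmt6 {Ω 𝒴 𝒳 A : Type*} [Fintype Ω] [Fintype 𝒳] [DecidableEq 𝒳]
    (P : Ω → ℝ) (L : 𝒴 → A → ℝ) (Yv : Ω → 𝒴) (Xv : ℕ → Ω → 𝒳)
    (hnn : ∀ ω, 0 ≤ P ω) (h1 : ∑ ω, P ω = 1)
    (hattain : ∀ w : Ω → ℝ, (∀ ω, 0 ≤ w ω) →
      ∃ a : A, ∀ a' : A, ∑ ω, w ω * L (Yv ω) a ≤ ∑ ω, w ω * L (Yv ω) a')
    (δ : ℕ) :
    (condH P L Yv (Xv δ)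
      = condH P L Yv (Xv 0)
        + (∑ k ∈ Finset.range δ,
            (condH P L Yv (Xv (k + 1)) - condH P L Yv (fun ω => (Xv k ω, Xv (k + 1) ω))))
        - ∑ k ∈ Finset.range δ,
            (condH P L Yv (Xv k) - condH P L Yv (fun ω => (Xv k ω, Xv (k + 1) ω))))
    ∧ Monotone (fun d : ℕ => ∑ k ∈ Finset.range d,
        (condH P L Yv (Xv (k + 1)) - condH P L Yv (fun ω => (Xv k ω, Xv (k + 1) ω))))
    ∧ Monotone (fun d : ℕ => ∑ k ∈ Finset.range d,
        (condH P L Yv (Xv k) - condH P L Yv (fun ω => (Xv k ω, Xv (k + 1) ω)))) :=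
  stmt6_general P L Yv Xv hnn hattain δ
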